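/- arXiv:patt-sol/9801003 — 2 statements merged into one kernel-verified Lean document; each statement's English description precedes it below -/
import Mathlib

section
/- First-moment identity for the mixing profile: if η̃ is a mixing profile for η₊, η₋ ∈ (−1/√3, 1/√3), then the function ξ ↦ ξ·[η̃(ξ) − η∞(ξ)] is integrable on ℝ and ∫_ℝ ξ·[η̃(ξ) − η∞(ξ)] dξ = A(η₋) − A(η₊). -/
noncomputable section

open Real Filter MeasureTheory Set

/-- The coefficient `a(η) = (1 - 3η²)/(1 - η²)`. -/
def aGL (η : ℝ) : ℝ := (1 - 3 * η ^ 2) / (1 - η ^ 2)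

/-- The primitive `A(η) = ∫₀^η a(s) ds`. -/
def AGL (η : ℝ) : ℝ := ∫ s in (0:ℝ)..η, aGL s

/-- A mixing profile for boundary values `ηp` (at `+∞`) and `ηm` (at `-∞`). -/
def IsMixingProfile (ηp ηm : ℝ) (e : ℝ → ℝ) : Prop :=
  ContDiff ℝ 2 e ∧
  (∀ ξ, e ξ ∈ Set.Ioo (-(1 / Real.sqrt 3)) (1 / Real.sqrt 3)) ∧
  (∀ ξ, deriv (deriv (fun x => AGL (e x))) ξ + ξ / 2 * deriv e ξ = 0) ∧
  Filter.Tendsto e Filter.atTop (nhds ηp) ∧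
  Filter.Tendsto e Filter.atBot (nhds ηm)
/-- The step function `η∞`, equal to `ηp` for `ξ > 0` and `ηm` for `ξ ≤ 0`. -/
def etaInf (ηp ηm : ℝ) (ξ : ℝ) : ℝ := if 0 < ξ then ηp else ηm

open Topology

/-!
The flux `g = a(η̃) η̃'` is the derivative of `A(η̃)`, so the equation reads
`g' = -(ξ/2) η̃' = -(ξ / 2a(η̃)) g`. Since `0 < a ≤ 1` on `(-1/√3, 1/√3)`, this forces
`|g(ξ)| ≤ |g(0)| e^{-ξ²/4}`; as `a(η̃)` is moreover bounded away from `0`, the same bound holds for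
`η̃'`, and integrating it from `ξ` to `±∞` gives `|ξ| |η̃(ξ) - η∞(ξ)| ≲ e^{-ξ²/4}`.
On each half-line, `Φ_± = ξ²/2 (η̃ - η±) + ξ g - A(η̃)` is a primitive of `ξ (η̃ - η±)` with
`Φ_±(0) = -A(η̃(0))` and `Φ_± → -A(η±)` at `±∞`, which gives the value of the integral.
-/

theorem exists_pos_le_of_eventually_cocompact {β : Type*} [TopologicalSpace β] [Nonempty β]
    {f : β → ℝ} (hf : Continuous f) (hpos : ∀ x, 0 < f x) {ε : ℝ} (hε : 0 < ε)
    (hfar : ∀ᶠ x in cocompact β, ε ≤ f x) : ∃ δ > 0, ∀ x, δ ≤ f x := by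
  obtain ⟨x₀, hx₀⟩ := (hf.min (continuous_const (y := ε))).exists_forall_le'
    (Classical.arbitrary β) (hfar.mono fun x hx => by rw [min_eq_right hx]; exact min_le_right _ _)
  exact ⟨min (f x₀) ε, lt_min (hpos x₀) hε, fun x => (hx₀ x).trans (min_le_left _ _)⟩

theorem eq_mul_exp_neg_integral_of_hasDerivAt {g q : ℝ → ℝ} (hq : Continuous q)
    (hg : ∀ x, HasDerivAt g (-(q x * g x)) x) (x : ℝ) :
    g x = g 0 * exp (-∫ s in (0 : ℝ)..x, q s) := by
  have hconst : ∀ x, HasDerivAt (fun y => g y * exp (∫ s in (0 : ℝ)..y, q s)) 0 x := fun x =>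
    ((hg x).mul (hq.integral_hasStrictDerivAt 0 x).hasDerivAt.exp).congr_deriv (by ring)
  have h := is_const_of_deriv_eq_zero (fun x => (hconst x).differentiableAt)
    (fun x => (hconst x).deriv) x 0
  simp only [intervalIntegral.integral_same, exp_zero, mul_one] at h
  rw [exp_neg, ← h, mul_inv_cancel_right₀ (exp_ne_zero _)]

theorem apply_zero_le_of_mul_deriv_nonneg {F F' : ℝ → ℝ} (hF : ∀ x, HasDerivAt F (F' x) x)
    (h : ∀ x, 0 ≤ x * F' x) (x : ℝ) : F 0 ≤ F x := by
  have hcont : Continuous F := continuous_iff_continuousAt.2 fun x => (hF x).continuousAt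
  have hdiff : Differentiable ℝ F := fun x => (hF x).differentiableAt
  rcases le_total 0 x with hx | hx
  · refine monotoneOn_of_deriv_nonneg (convex_Ici 0) hcont.continuousOn hdiff.differentiableOn
      (fun y hy => ?_) self_mem_Ici hx hx
    rw [interior_Ici] at hy
    rw [(hF y).deriv]
    exact nonneg_of_mul_nonneg_right (h y) hy
  · refine antitoneOn_of_deriv_nonpos (convex_Iic 0) hcont.continuousOn hdiff.differentiableOn
      (fun y hy => ?_) hx self_mem_Iic hx
    rw [interior_Iic] at hy
    rw [(hF y).deriv]
    exact nonpos_of_mul_nonneg_right (h y) hy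

theorem mul_sq_le_integral {q : ℝ → ℝ} {b : ℝ} (hq : Continuous q)
    (h : ∀ s, 2 * b * s ^ 2 ≤ s * q s) (x : ℝ) : b * x ^ 2 ≤ ∫ s in (0 : ℝ)..x, q s := by
  have hF : ∀ x, HasDerivAt (fun y => (∫ s in (0 : ℝ)..y, q s) - b * y ^ 2)
      (q x - 2 * b * x) x := fun x =>
    ((hq.integral_hasStrictDerivAt 0 x).hasDerivAt.sub
      ((hasDerivAt_pow 2 x).const_mul b)).congr_deriv (by ring)
  have := apply_zero_le_of_mul_deriv_nonneg hF (fun s => by nlinarith [h s]) x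
  simp only [intervalIntegral.integral_same] at this
  linarith

theorem abs_le_mul_exp_neg_mul_sq_of_hasDerivAt {g q : ℝ → ℝ} {b : ℝ} (hq : Continuous q)
    (hg : ∀ x, HasDerivAt g (-(q x * g x)) x) (hqb : ∀ s, 2 * b * s ^ 2 ≤ s * q s) (x : ℝ) :
    |g x| ≤ |g 0| * exp (-b * x ^ 2) := by
  rw [eq_mul_exp_neg_integral_of_hasDerivAt hq hg x, abs_mul, abs_exp]
  gcongr
  linarith [mul_sq_le_integral hq hqb x]

theorem abs_sub_le_of_tendsto_atTop_of_abs_deriv_le {f f' : ℝ → ℝ} {b C L ξ : ℝ} (hb : 0 < b)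
    (hf : ∀ x, HasDerivAt f (f' x) x) (hf' : ∀ x, |f' x| ≤ C * exp (-b * x ^ 2))
    (hL : Tendsto f atTop (𝓝 L)) (hξ : 0 < ξ) :
    |f ξ - L| ≤ C / (2 * b * ξ) * exp (-b * ξ ^ 2) := by
  have hC : 0 ≤ C := nonneg_of_mul_nonneg_left ((abs_nonneg _).trans (hf' 0)) (exp_pos _)
  -- the integral from `ξ` to `x` of the majorant `C (x / ξ) e^{-b x²}` of `|f'|`
  have hB : ∀ x, HasDerivAt (fun x => C / (2 * b * ξ) * (exp (-b * ξ ^ 2) - exp (-b * x ^ 2)))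
      (C / ξ * (x * exp (-b * x ^ 2))) x := fun x =>
    ((((hasDerivAt_pow 2 x).const_mul (-b)).exp.const_sub _).const_mul _).congr_deriv
      (by field_simp; ring)
  have hnear : ∀ T ∈ Ici ξ, |f T - f ξ| ≤ C / (2 * b * ξ) * exp (-b * ξ ^ 2) := by
    intro T hT
    have hbound : ∀ x ∈ Ico ξ T, ‖f' x‖ ≤ C / ξ * (x * exp (-b * x ^ 2)) := by
      intro x hx
      calc ‖f' x‖ ≤ C * exp (-b * x ^ 2) := hf' x
        _ ≤ C * (x / ξ) * exp (-b * x ^ 2) := by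
          gcongr
          exact le_mul_of_one_le_right hC ((one_le_div hξ).2 hx.1)
        _ = C / ξ * (x * exp (-b * x ^ 2)) := by ring
    have := image_norm_le_of_norm_deriv_right_le_deriv_boundary (f := fun x => f x - f ξ)
      (fun x _ => ((hf x).sub_const (f ξ)).continuousAt.continuousWithinAt)
      (fun x _ => ((hf x).sub_const (f ξ)).hasDerivWithinAt) (by simp) hB hbound
      (right_mem_Icc.2 hT)
    refine this.trans ?_
    have : 0 ≤ C / (2 * b * ξ) := by positivity
    nlinarith [exp_pos (-b * T ^ 2)]
  have := le_of_tendsto ((hL.sub_const (f ξ)).abs) (eventually_atTop.2 ⟨ξ, hnear⟩)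
  rwa [abs_sub_comm]

theorem abs_sub_le_of_tendsto_atBot_of_abs_deriv_le {f f' : ℝ → ℝ} {b C L ξ : ℝ} (hb : 0 < b)
    (hf : ∀ x, HasDerivAt f (f' x) x) (hf' : ∀ x, |f' x| ≤ C * exp (-b * x ^ 2))
    (hL : Tendsto f atBot (𝓝 L)) (hξ : ξ < 0) :
    |f ξ - L| ≤ C / (2 * b * -ξ) * exp (-b * ξ ^ 2) := by
  have := abs_sub_le_of_tendsto_atTop_of_abs_deriv_le (f := fun x => f (-x))
    (f' := fun x => -f' (-x)) hb
    (fun x => ((hf (-x)).comp x (hasDerivAt_neg x)).congr_deriv (mul_neg_one _))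
    (fun x => by simpa using hf' (-x)) (hL.comp tendsto_neg_atTop_atBot) (neg_pos.2 hξ)
  simpa using this

theorem sq_lt_one_third_of_mem_Ioo {η : ℝ} (h : η ∈ Ioo (-(1 / √3)) (1 / √3)) :
    η ^ 2 < 1 / 3 := by
  calc η ^ 2 < (1 / √3) ^ 2 := sq_lt_sq' h.1 h.2
    _ = 1 / 3 := by rw [div_pow, one_pow, sq_sqrt (by norm_num)]

theorem aGL_pos_of_sq_lt {η : ℝ} (h : η ^ 2 < 1 / 3) : 0 < aGL η :=
  div_pos (by linarith) (by linarith)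

theorem aGL_le_one {η : ℝ} (h : η ^ 2 < 1) : aGL η ≤ 1 :=
  (div_le_one (by linarith)).2 (by nlinarith)

theorem differentiableAt_aGL {η : ℝ} (h : η ^ 2 < 1) : DifferentiableAt ℝ aGL η :=
  (by fun_prop : DifferentiableAt ℝ (fun η : ℝ => 1 - 3 * η ^ 2) η).div (by fun_prop)
    (by linarith)

theorem hasDerivAt_AGL {η : ℝ} (h : η ^ 2 < 1) : HasDerivAt AGL (aGL η) η := by
  have hopen : IsOpen {y : ℝ | y ^ 2 < 1} := isOpen_lt (continuous_pow 2) continuous_const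
  have hcont : ∀ y ∈ {y : ℝ | y ^ 2 < 1}, ContinuousAt aGL y := fun y hy =>
    (differentiableAt_aGL hy).continuousAt
  have hsub : uIcc 0 η ⊆ {y : ℝ | y ^ 2 < 1} := by
    intro y hy
    rcases mem_uIcc.1 hy with ⟨h0, hη⟩ | ⟨hη, h0⟩ <;> show y ^ 2 < 1 <;> nlinarith
  exact intervalIntegral.integral_hasDerivAt_right
    (ContinuousOn.intervalIntegrable fun y hy => (hcont y (hsub hy)).continuousWithinAt)
    (ContinuousAt.stronglyMeasurableAtFilter hopen hcont η h) (hcont η h)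

def mixingFlux (e : ℝ → ℝ) (ξ : ℝ) : ℝ := aGL (e ξ) * deriv e ξ

def momentPotential (e : ℝ → ℝ) (η ξ : ℝ) : ℝ :=
  ξ ^ 2 / 2 * (e ξ - η) + ξ * mixingFlux e ξ - AGL (e ξ)

namespace IsMixingProfile

variable {ηp ηm : ℝ} {e : ℝ → ℝ}

theorem sq_lt (he : IsMixingProfile ηp ηm e) (ξ : ℝ) : e ξ ^ 2 < 1 / 3 :=
  sq_lt_one_third_of_mem_Ioo (he.2.1 ξ)

theorem aGL_pos (he : IsMixingProfile ηp ηm e) (ξ : ℝ) : 0 < aGL (e ξ) :=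
  aGL_pos_of_sq_lt (he.sq_lt ξ)

theorem differentiable (he : IsMixingProfile ηp ηm e) : Differentiable ℝ e :=
  he.1.differentiable (by norm_num)

theorem differentiable_aGL_comp (he : IsMixingProfile ηp ηm e) :
    Differentiable ℝ fun ξ => aGL (e ξ) := fun ξ =>
  (differentiableAt_aGL (by linarith [he.sq_lt ξ])).comp ξ (he.differentiable ξ)

theorem hasDerivAt_AGL_comp (he : IsMixingProfile ηp ηm e) (ξ : ℝ) :
    HasDerivAt (fun x => AGL (e x)) (mixingFlux e ξ) ξ :=
  (hasDerivAt_AGL (by linarith [he.sq_lt ξ])).comp ξ (he.differentiable ξ).hasDerivAt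

theorem hasDerivAt_mixingFlux (he : IsMixingProfile ηp ηm e) (ξ : ℝ) :
    HasDerivAt (mixingFlux e) (-(ξ / 2 * deriv e ξ)) ξ := by
  have hC2 : ContDiff ℝ (1 + 1) e := he.1
  have hderiv : Differentiable ℝ (deriv e) :=
    (contDiff_succ_iff_deriv.1 hC2).2.2.differentiable one_ne_zero
  have hflux : deriv (fun x => AGL (e x)) = mixingFlux e :=
    funext fun x => (he.hasDerivAt_AGL_comp x).deriv
  have hode := he.2.2.1 ξ
  rw [hflux] at hode
  have hdiff : Differentiable ℝ (mixingFlux e) := he.differentiable_aGL_comp.mul hderiv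
  exact (hdiff ξ).hasDerivAt.congr_deriv (by linarith)

theorem abs_mixingFlux_le (he : IsMixingProfile ηp ηm e) (ξ : ℝ) :
    |mixingFlux e ξ| ≤ |mixingFlux e 0| * exp (-(1 / 4) * ξ ^ 2) := by
  refine abs_le_mul_exp_neg_mul_sq_of_hasDerivAt (q := fun s => s / (2 * aGL (e s)))
    (continuous_id.div (continuous_const.mul he.differentiable_aGL_comp.continuous)
      fun s => by linarith [he.aGL_pos s])
    (fun x => (he.hasDerivAt_mixingFlux x).congr_deriv ?_) (fun s => ?_) ξ
  · have := (he.aGL_pos x).ne'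
    simp only [mixingFlux]
    field_simp
  · have ha := he.aGL_pos s
    have ha1 := aGL_le_one (by linarith [he.sq_lt s] : e s ^ 2 < 1)
    rw [show s * (s / (2 * aGL (e s))) = s ^ 2 / (2 * aGL (e s)) by ring,
      le_div_iff₀ (by linarith)]
    nlinarith [sq_nonneg s]

theorem exists_pos_le_aGL (he : IsMixingProfile ηp ηm e) (hp : ηp ^ 2 < 1 / 3)
    (hm : ηm ^ 2 < 1 / 3) : ∃ δ > 0, ∀ ξ, δ ≤ aGL (e ξ) := by
  obtain ⟨ε, hε, hεmin⟩ := exists_between (lt_min (aGL_pos_of_sq_lt hp) (aGL_pos_of_sq_lt hm))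
  have hlim : ∀ {l : Filter ℝ} {η : ℝ}, Tendsto e l (𝓝 η) → η ^ 2 < 1 / 3 → ε < aGL η →
      ∀ᶠ ξ in l, ε ≤ aGL (e ξ) := fun hel hη hεη =>
    ((differentiableAt_aGL (by linarith)).continuousAt.tendsto.comp hel).eventually_const_le hεη
  refine exists_pos_le_of_eventually_cocompact he.differentiable_aGL_comp.continuous he.aGL_pos
    hε ?_
  rw [cocompact_eq_atBot_atTop]
  exact eventually_sup.2
    ⟨hlim he.2.2.2.2 hm (lt_min_iff.1 hεmin).2, hlim he.2.2.2.1 hp (lt_min_iff.1 hεmin).1⟩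

theorem exists_abs_deriv_le (he : IsMixingProfile ηp ηm e) (hp : ηp ^ 2 < 1 / 3)
    (hm : ηm ^ 2 < 1 / 3) : ∃ C, ∀ ξ, |deriv e ξ| ≤ C * exp (-(1 / 4) * ξ ^ 2) := by
  obtain ⟨δ, hδ, hδle⟩ := he.exists_pos_le_aGL hp hm
  refine ⟨|mixingFlux e 0| / δ, fun ξ => ?_⟩
  have ha := he.aGL_pos ξ
  have hflux : deriv e ξ = mixingFlux e ξ / aGL (e ξ) := by
    rw [mixingFlux, mul_div_cancel_left₀ _ ha.ne']
  rw [hflux, abs_div, abs_of_pos ha, div_mul_eq_mul_div]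
  exact div_le_div₀ (by positivity) (he.abs_mixingFlux_le ξ) hδ (hδle ξ)

theorem exists_abs_mul_sub_etaInf_le (he : IsMixingProfile ηp ηm e) (hp : ηp ^ 2 < 1 / 3)
    (hm : ηm ^ 2 < 1 / 3) :
    ∃ K, ∀ ξ, |ξ * (e ξ - etaInf ηp ηm ξ)| ≤ K * exp (-(1 / 4) * ξ ^ 2) := by
  obtain ⟨C, hC⟩ := he.exists_abs_deriv_le hp hm
  have hC0 : 0 ≤ C := nonneg_of_mul_nonneg_left ((abs_nonneg _).trans (hC 0)) (exp_pos _)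
  have hf := fun x => (he.differentiable x).hasDerivAt
  refine ⟨2 * C, fun ξ => ?_⟩
  rcases lt_trichotomy ξ 0 with hξ | rfl | hξ
  · have := hξ.ne
    rw [etaInf, if_neg hξ.not_gt, abs_mul, abs_of_neg hξ]
    calc -ξ * |e ξ - ηm| ≤ -ξ * (C / (2 * (1 / 4) * -ξ) * exp (-(1 / 4) * ξ ^ 2)) :=
          mul_le_mul_of_nonneg_left (abs_sub_le_of_tendsto_atBot_of_abs_deriv_le
            (by norm_num) hf hC he.2.2.2.2 hξ) (by linarith)
      _ = 2 * C * exp (-(1 / 4) * ξ ^ 2) := by field_simp; ring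
  · simp only [zero_mul, abs_zero]
    positivity
  · rw [etaInf, if_pos hξ, abs_mul, abs_of_pos hξ]
    calc ξ * |e ξ - ηp| ≤ ξ * (C / (2 * (1 / 4) * ξ) * exp (-(1 / 4) * ξ ^ 2)) :=
          mul_le_mul_of_nonneg_left (abs_sub_le_of_tendsto_atTop_of_abs_deriv_le
            (by norm_num) hf hC he.2.2.2.1 hξ) hξ.le
      _ = 2 * C * exp (-(1 / 4) * ξ ^ 2) := by field_simp; ring

theorem integrable_mul_sub_etaInf (he : IsMixingProfile ηp ηm e) (hp : ηp ^ 2 < 1 / 3)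
    (hm : ηm ^ 2 < 1 / 3) : Integrable fun ξ => ξ * (e ξ - etaInf ηp ηm ξ) := by
  obtain ⟨K, hK⟩ := he.exists_abs_mul_sub_etaInf_le hp hm
  refine ((integrable_exp_neg_mul_sq (by norm_num : (0 : ℝ) < 1 / 4)).const_mul K).mono' ?_
    (ae_of_all _ hK)
  exact (measurable_id.mul (he.differentiable.continuous.measurable.sub
    (measurable_const.ite measurableSet_Ioi measurable_const))).aestronglyMeasurable

theorem hasDerivAt_momentPotential (he : IsMixingProfile ηp ηm e) (η ξ : ℝ) :
    HasDerivAt (momentPotential e η) (ξ * (e ξ - η)) ξ := by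
  have hsq : HasDerivAt (fun x : ℝ => x ^ 2 / 2) ξ ξ := by
    simpa using (hasDerivAt_pow 2 ξ).div_const 2
  exact (((hsq.mul ((he.differentiable ξ).hasDerivAt.sub_const η)).add
    ((hasDerivAt_id ξ).mul (he.hasDerivAt_mixingFlux ξ))).sub
    (he.hasDerivAt_AGL_comp ξ)).congr_deriv (by simp only [mixingFlux, id]; ring)

theorem tendsto_momentPotential (he : IsMixingProfile ηp ηm e) (hp : ηp ^ 2 < 1 / 3)
    (hm : ηm ^ 2 < 1 / 3) {l : Filter ℝ} {η : ℝ} (hl : l ≤ cocompact ℝ) (hη : η ^ 2 < 1)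
    (hel : Tendsto e l (𝓝 η)) (hstep : ∀ᶠ ξ in l, etaInf ηp ηm ξ = η) :
    Tendsto (momentPotential e η) l (𝓝 (-AGL η)) := by
  obtain ⟨K, hK⟩ := he.exists_abs_mul_sub_etaInf_le hp hm
  have hgauss : Tendsto (fun ξ => |ξ| * exp (-(1 / 4) * ξ ^ 2)) l (𝓝 0) := by
    simpa using (tendsto_rpow_abs_mul_exp_neg_mul_sq_cocompact
      (by norm_num : (0 : ℝ) < 1 / 4) 1).mono_left hl
  have hjump : Tendsto (fun ξ => ξ ^ 2 / 2 * (e ξ - η)) l (𝓝 0) := by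
    refine squeeze_zero_norm' ?_ (by simpa only [mul_zero] using hgauss.const_mul (K / 2))
    filter_upwards [hstep] with ξ hξ
    have := hK ξ
    rw [hξ, abs_mul] at this
    calc ‖ξ ^ 2 / 2 * (e ξ - η)‖ = |ξ| / 2 * (|ξ| * |e ξ - η|) := by
          rw [Real.norm_eq_abs, abs_mul, abs_div, abs_pow, abs_two]; ring
      _ ≤ |ξ| / 2 * (K * exp (-(1 / 4) * ξ ^ 2)) := by gcongr
      _ = K / 2 * (|ξ| * exp (-(1 / 4) * ξ ^ 2)) := by ring
  have hflux : Tendsto (fun ξ => ξ * mixingFlux e ξ) l (𝓝 0) := by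
    refine squeeze_zero_norm (fun ξ => ?_)
      (by simpa only [mul_zero] using hgauss.const_mul |mixingFlux e 0|)
    rw [norm_mul, Real.norm_eq_abs, Real.norm_eq_abs]
    nlinarith [he.abs_mixingFlux_le ξ, abs_nonneg ξ]
  have := (hjump.add hflux).sub ((hasDerivAt_AGL hη).continuousAt.tendsto.comp hel)
  rwa [zero_add, zero_sub] at this

theorem integral_Ioi_mul_sub_etaInf (he : IsMixingProfile ηp ηm e) (hp : ηp ^ 2 < 1 / 3)
    (hm : ηm ^ 2 < 1 / 3) :
    ∫ ξ in Ioi 0, ξ * (e ξ - etaInf ηp ηm ξ) = AGL (e 0) - AGL ηp := by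
  have hstep : EqOn (fun ξ => ξ * (e ξ - etaInf ηp ηm ξ)) (fun ξ => ξ * (e ξ - ηp)) (Ioi 0) :=
    fun ξ hξ => by simp only [etaInf, if_pos (mem_Ioi.1 hξ)]
  rw [setIntegral_congr_fun measurableSet_Ioi hstep,
    integral_Ioi_of_hasDerivAt_of_tendsto' (fun ξ _ => he.hasDerivAt_momentPotential ηp ξ)
      ((he.integrable_mul_sub_etaInf hp hm).integrableOn.congr_fun hstep measurableSet_Ioi)
      (he.tendsto_momentPotential hp hm atTop_le_cocompact (by linarith) he.2.2.2.1
        (eventually_gt_atTop 0 |>.mono fun ξ hξ => if_pos hξ))]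
  simp [momentPotential]
  ring

theorem integral_Iic_mul_sub_etaInf (he : IsMixingProfile ηp ηm e) (hp : ηp ^ 2 < 1 / 3)
    (hm : ηm ^ 2 < 1 / 3) :
    ∫ ξ in Iic 0, ξ * (e ξ - etaInf ηp ηm ξ) = AGL ηm - AGL (e 0) := by
  have hstep : EqOn (fun ξ => ξ * (e ξ - etaInf ηp ηm ξ)) (fun ξ => ξ * (e ξ - ηm)) (Iic 0) :=
    fun ξ hξ => by simp only [etaInf, if_neg (mem_Iic.1 hξ).not_gt]
  rw [setIntegral_congr_fun measurableSet_Iic hstep,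
    integral_Iic_of_hasDerivAt_of_tendsto' (fun ξ _ => he.hasDerivAt_momentPotential ηm ξ)
      ((he.integrable_mul_sub_etaInf hp hm).integrableOn.congr_fun hstep measurableSet_Iic)
      (he.tendsto_momentPotential hp hm atBot_le_cocompact (by linarith) he.2.2.2.2
        (eventually_le_atBot 0 |>.mono fun ξ hξ => if_neg hξ.not_gt))]
  simp [momentPotential]
  ring

end IsMixingProfile

/-- First-moment identity for the mixing profile. -/
theorem mixing_profile_first_moment
    (ηp ηm : ℝ)
    (hp : ηp ∈ Set.Ioo (-(1 / Real.sqrt 3)) (1 / Real.sqrt 3))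
    (hm : ηm ∈ Set.Ioo (-(1 / Real.sqrt 3)) (1 / Real.sqrt 3))
    (e : ℝ → ℝ) (he : IsMixingProfile ηp ηm e) :
    Integrable (fun ξ => ξ * (e ξ - etaInf ηp ηm ξ)) ∧
    (∫ ξ : ℝ, ξ * (e ξ - etaInf ηp ηm ξ)) = AGL ηm - AGL ηp := by
  have hp' := sq_lt_one_third_of_mem_Ioo hp
  have hm' := sq_lt_one_third_of_mem_Ioo hm
  have hint := he.integrable_mul_sub_etaInf hp' hm'
  refine ⟨hint, ?_⟩
  rw [← intervalIntegral.integral_Iic_add_Ioi hint.integrableOn hint.integrableOn,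
    he.integral_Iic_mul_sub_etaInf hp' hm', he.integral_Ioi_mul_sub_etaInf hp' hm']
  ring
end
end

section
/- Contraction for the rescaled phase diffusion equation: let η̃ be a mixing profile for η₊, η₋ ∈ (−1/√3, 1/√3) and Ñ(ξ) = η₋·ξ + ∫_{−∞}^ξ [η̃(s) − η₋] ds. Let ψ₁, ψ₂ : [0, ∞) × ℝ → ℝ be smooth functions such that for each τ ≥ 0 the functions ψⱼ(τ, ·) and ∂τψⱼ(τ, ·) are Schwartz functions of ξ, depending continuously on τ in every Schwartz seminorm, and such that each ψⱼ satisfies the equation ∂τψ = ∂ξ[A(η̃ + ∂ξψ)] + (ξ/2)·(η̃ + ∂ξψ) − (1/2)·(Ñ + ψ) pointwise, with η̃(ξ) + ∂ξψⱼ(τ, ξ) ∈ (−1/√3, 1/√3) for all τ ≥ 0 and ξ ∈ ℝ. Then for all τ ≥ 0: (∫_ℝ (ψ₁(τ,ξ) − ψ₂(τ,ξ))² dξ)^{1/2} ≤ e^{−3τ/4} · (∫_ℝ (ψ₁(0,ξ) − ψ₂(0,ξ))² dξ)^{1/2}. -/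
/-!
The difference `φ = ψ₁ - ψ₂` solves `∂τφ = ∂ξ[A(u₁) - A(u₂)] + (ξ/2) ∂ξφ - φ/2` with
`uⱼ = η̃ + ∂ξψⱼ`: the profile and `Ñ` cancel. Pairing with `φ` and integrating by parts,
the flux term contributes `-∫ (u₁ - u₂)(A(u₁) - A(u₂)) ≤ 0`, since `A' = a ≥ 0` on
`[-1/√3, 1/√3]`, and `∫ ξ φ ∂ξφ = -½ ∫ φ²`. Hence `d/dτ ‖φ‖² ≤ -(3/2) ‖φ‖²`, and Grönwall
gives `‖φ(τ)‖² ≤ e^{-3τ/2} ‖φ(0)‖²`. Because `a ≤ 1` there as well, `A(u₁) - A(u₂)` is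
dominated by `|∂ξφ|`, which makes the integrations by parts legitimate; differentiating
under the integral in `τ` uses Schwartz bounds that are uniform on compact time intervals.
-/

noncomputable section

open Real Filter MeasureTheory Set

/-- The antiderivative `Ñ(ξ) = η₋ ξ + ∫_{-∞}^ξ (η̃(s) - η₋) ds`. -/
def NGL (e : ℝ → ℝ) (ηm : ℝ) (ξ : ℝ) : ℝ :=
  ηm * ξ + ∫ s in Set.Iic ξ, (e s - ηm)

open Topology

lemma one_div_sqrt_three_lt_one : 1 / √3 < 1 := by
  rw [div_lt_one (by positivity)]
  exact lt_sqrt_of_sq_lt (by norm_num)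

lemma sq_le_one_third_of_mem_Icc {x : ℝ} (hx : x ∈ Icc (-(1 / √3)) (1 / √3)) :
    x ^ 2 ≤ 1 / 3 := by
  simpa [div_pow] using sq_le_sq' hx.1 hx.2

lemma Icc_one_div_sqrt_three_subset : Icc (-(1 / √3)) (1 / √3) ⊆ Ioo (-1) 1 :=
  Icc_subset_Ioo (by linarith [one_div_sqrt_three_lt_one]) one_div_sqrt_three_lt_one

lemma aGL_mem_Icc {x : ℝ} (hx : x ∈ Icc (-(1 / √3)) (1 / √3)) : aGL x ∈ Icc 0 1 := by
  have h := sq_le_one_third_of_mem_Icc hx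
  have hpos : 0 < 1 - x ^ 2 := by linarith
  exact ⟨div_nonneg (by linarith) hpos.le, (div_le_one hpos).2 (by nlinarith)⟩

lemma continuousOn_aGL : ContinuousOn aGL (Ioo (-1) 1) :=
  ContinuousOn.div (by fun_prop) (by fun_prop) fun x hx => by nlinarith [hx.1, hx.2]

lemma hasDerivAt_AGL_s8 {y : ℝ} (hy : y ∈ Ioo (-1) 1) : HasDerivAt AGL (aGL y) y := by
  have h0 : (0 : ℝ) ∈ Ioo (-1) 1 := by norm_num
  refine intervalIntegral.integral_hasDerivAt_right ?_ ?_ ?_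
  · exact (continuousOn_aGL.mono (ordConnected_Ioo.uIcc_subset h0 hy)).intervalIntegrable
  · exact continuousOn_aGL.stronglyMeasurableAtFilter isOpen_Ioo y hy
  · exact continuousOn_aGL.continuousAt (isOpen_Ioo.mem_nhds hy)

lemma monotoneOn_AGL : MonotoneOn AGL (Icc (-(1 / √3)) (1 / √3)) := by
  have hA : ∀ x ∈ Icc (-(1 / √3)) (1 / √3), HasDerivAt AGL (aGL x) x :=
    fun x hx => hasDerivAt_AGL_s8 (Icc_one_div_sqrt_three_subset hx)
  exact monotoneOn_of_hasDerivWithinAt_nonneg (convex_Icc _ _)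
    (fun x hx => (hA x hx).continuousAt.continuousWithinAt)
    (fun x hx => (hA x (interior_subset hx)).hasDerivWithinAt)
    (fun x hx => (aGL_mem_Icc (interior_subset hx)).1)

lemma abs_AGL_sub_le {u v : ℝ} (hu : u ∈ Icc (-(1 / √3)) (1 / √3))
    (hv : v ∈ Icc (-(1 / √3)) (1 / √3)) : |AGL u - AGL v| ≤ |u - v| := by
  simpa only [Real.norm_eq_abs, one_mul] using
    (convex_Icc _ _).norm_image_sub_le_of_norm_hasDerivWithin_le (C := 1)
      (fun x hx => (hasDerivAt_AGL_s8 (Icc_one_div_sqrt_three_subset hx)).hasDerivWithinAt)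
      (fun x hx => by
        rw [Real.norm_eq_abs, abs_of_nonneg (aGL_mem_Icc hx).1]
        exact (aGL_mem_Icc hx).2)
      hv hu

lemma sub_mul_AGL_sub_nonneg {u v : ℝ} (hu : u ∈ Icc (-(1 / √3)) (1 / √3))
    (hv : v ∈ Icc (-(1 / √3)) (1 / √3)) : 0 ≤ (u - v) * (AGL u - AGL v) := by
  rcases le_total v u with h | h
  · exact mul_nonneg (sub_nonneg.2 h) (sub_nonneg.2 (monotoneOn_AGL hv hu h))
  · exact mul_nonneg_of_nonpos_of_nonpos (sub_nonpos.2 h) (sub_nonpos.2 (monotoneOn_AGL hu hv h))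

namespace SchwartzMap

lemma integrable_mul (f g : 𝓢(ℝ, ℝ)) : Integrable (fun x => f x * g x) :=
  (pairing (ContinuousLinearMap.mul ℝ ℝ) f g).integrable

lemma integrable_id_mul_mul (f g : 𝓢(ℝ, ℝ)) : Integrable (fun x => x * (f x * g x)) := by
  refine ((pairing (ContinuousLinearMap.mul ℝ ℝ) f g).integrable_pow_mul volume 1).mono'
    (by fun_prop) (ae_of_all _ fun x => ?_)
  simp [norm_mul]

variable {F : Type*} [NormedAddCommGroup F] [NormedSpace ℝ F]

lemma differentiable_deriv (f : 𝓢(ℝ, F)) : Differentiable ℝ (deriv f) := by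
  simpa only [funext (derivCLM_apply ℝ f)] using (derivCLM ℝ F f).differentiable

lemma deriv_coe_sub (f g : 𝓢(ℝ, F)) (x : ℝ) : deriv ⇑(f - g) x = deriv f x - deriv g x :=
  deriv_sub f.differentiableAt g.differentiableAt

lemma norm_le_seminorm_mul_inv_one_add_sq (f : 𝓢(ℝ, F)) (ξ : ℝ) :
    ‖f ξ‖ ≤ (SchwartzMap.seminorm ℝ 0 0 f + SchwartzMap.seminorm ℝ 2 0 f) * (1 + ξ ^ 2)⁻¹ := by
  rw [le_mul_inv_iff₀ (by positivity)]
  have h0 := norm_le_seminorm ℝ f ξ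
  have h2 := norm_pow_mul_le_seminorm ℝ f 2 ξ
  rw [Real.norm_eq_abs, sq_abs] at h2
  linarith

lemma exists_decay_bound_of_continuousOn {X : Type*} [TopologicalSpace X] {Φ : X → 𝓢(ℝ, F)}
    {K : Set X} (hK : IsCompact K) (hΦ : ContinuousOn Φ K) :
    ∃ C, 0 ≤ C ∧ ∀ t ∈ K, ∀ ξ, ‖Φ t ξ‖ ≤ C * (1 + ξ ^ 2)⁻¹ := by
  have hp : Continuous fun f : 𝓢(ℝ, F) =>
      SchwartzMap.seminorm ℝ 0 0 f + SchwartzMap.seminorm ℝ 2 0 f :=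
    ((schwartz_withSeminorms ℝ ℝ F).continuous_seminorm (0, 0)).add
      ((schwartz_withSeminorms ℝ ℝ F).continuous_seminorm (2, 0))
  obtain ⟨C, hC⟩ := hK.exists_bound_of_continuousOn (hp.comp_continuousOn hΦ)
  refine ⟨max C 0, le_max_right _ _, fun t ht ξ =>
    (norm_le_seminorm_mul_inv_one_add_sq (Φ t) ξ).trans ?_⟩
  gcongr
  exact (le_abs_self _).trans ((hC t ht).trans (le_max_left _ _))

lemma integral_sq_eq_norm_toLp_sq (f : 𝓢(ℝ, ℝ)) : ∫ ξ, f ξ ^ 2 = ‖f.toLp 2‖ ^ 2 := by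
  rw [← real_inner_self_eq_norm_sq, L2.inner_def]
  refine integral_congr_ae ?_
  filter_upwards [f.coeFn_toLp 2 volume] with ξ hξ
  simp [hξ, sq]

lemma continuousOn_integral_sq {X : Type*} [TopologicalSpace X] {Φ : X → 𝓢(ℝ, ℝ)}
    {s : Set X} (hΦ : ContinuousOn Φ s) : ContinuousOn (fun t => ∫ ξ, Φ t ξ ^ 2) s := by
  simp_rw [integral_sq_eq_norm_toLp_sq]
  exact ((continuous_norm.comp (continuous_toLp (p := 2) (μ := volume))).pow 2).comp_continuousOn hΦ

lemma hasDerivAt_integral_sq {Φ dΦ : ℝ → 𝓢(ℝ, ℝ)} {s : Set ℝ} {t₀ : ℝ} (hs : s ∈ 𝓝 t₀)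
    (hΦ : ContinuousOn Φ s) (hdΦ : ContinuousOn dΦ s)
    (hderiv : ∀ t ∈ s, ∀ ξ, HasDerivAt (fun t => Φ t ξ) (dΦ t ξ) t) :
    HasDerivAt (fun t => ∫ ξ, Φ t ξ ^ 2) (∫ ξ, 2 * (Φ t₀ ξ * dΦ t₀ ξ)) t₀ := by
  obtain ⟨ε, hε, hεs⟩ := Metric.nhds_basis_closedBall.mem_iff.1 hs
  have hK := isCompact_closedBall t₀ ε
  obtain ⟨C₁, hC₁0, hC₁⟩ := exists_decay_bound_of_continuousOn hK (hΦ.mono hεs)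
  obtain ⟨C₂, hC₂0, hC₂⟩ := exists_decay_bound_of_continuousOn hK (hdΦ.mono hεs)
  refine (hasDerivAt_integral_of_dominated_loc_of_deriv_le
    (F := fun t ξ => Φ t ξ ^ 2) (F' := fun t ξ => 2 * (Φ t ξ * dΦ t ξ))
    (bound := fun ξ => 2 * (C₁ * C₂) * (1 + ξ ^ 2)⁻¹) (Metric.closedBall_mem_nhds t₀ hε)
    (Eventually.of_forall fun t => by fun_prop) (by simpa [sq] using integrable_mul (Φ t₀) (Φ t₀))
    (by fun_prop) (ae_of_all _ fun ξ t ht => ?_) (integrable_inv_one_add_sq.const_mul _)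
    (ae_of_all _ fun ξ t ht => ?_)).2
  · have hinv : (1 + ξ ^ 2)⁻¹ ≤ 1 := inv_le_one_of_one_le₀ (by nlinarith)
    calc ‖2 * (Φ t ξ * dΦ t ξ)‖ = 2 * (‖Φ t ξ‖ * ‖dΦ t ξ‖) := by simp [norm_mul]
      _ ≤ 2 * (C₁ * (1 + ξ ^ 2)⁻¹ * C₂) := by
        gcongr 2 * ?_
        exact mul_le_mul (hC₁ t ht ξ) ((hC₂ t ht ξ).trans (mul_le_of_le_one_right hC₂0 hinv))
          (norm_nonneg _) (mul_nonneg hC₁0 (by positivity))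
      _ = 2 * (C₁ * C₂) * (1 + ξ ^ 2)⁻¹ := by ring
  · exact ((hderiv t (hεs ht) ξ).fun_pow 2).congr_deriv (by ring)

lemma integrable_mul_of_norm_le (f ψ : 𝓢(ℝ, ℝ)) {g : ℝ → ℝ} (hg : Continuous g)
    (hgψ : ∀ x, ‖g x‖ ≤ ‖ψ x‖) : Integrable (fun x => f x * g x) :=
  (integrable_mul f ψ).norm.mono' (by fun_prop) (ae_of_all _ fun x => by
    rw [norm_mul, norm_mul]; gcongr; exact hgψ x)

lemma integrable_id_mul_mul_deriv (φ : 𝓢(ℝ, ℝ)) :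
    Integrable (fun x => x * (φ x * deriv φ x)) := by
  simpa only [derivCLM_apply] using integrable_id_mul_mul φ (derivCLM ℝ ℝ φ)

lemma integral_id_mul_mul_deriv (φ : 𝓢(ℝ, ℝ)) :
    ∫ ξ, ξ * (φ ξ * deriv φ ξ) = -(1 / 2) * ∫ ξ, φ ξ ^ 2 := by
  have hsq : Integrable (fun x => φ x ^ 2) := by simpa only [sq] using integrable_mul φ φ
  have hparts := integral_mul_deriv_eq_deriv_mul_of_integrable (u := id) (u' := fun _ => 1)
    (v := fun x => φ x ^ 2) (v' := fun x => 2 * (φ x * deriv φ x))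
    (fun x _ => hasDerivAt_id x)
    (fun x _ => (φ.differentiableAt.hasDerivAt.fun_pow 2).congr_deriv (by ring))
    (((integrable_id_mul_mul_deriv φ).const_mul 2).congr (ae_of_all _ fun x => by
      simp only [Pi.mul_apply, id]; ring))
    (by simpa only [Pi.mul_def, one_mul] using hsq)
    ((integrable_id_mul_mul φ φ).congr (ae_of_all _ fun x => by simp only [Pi.mul_apply, id]; ring))
  simp only [id, one_mul, mul_left_comm _ (2 : ℝ), integral_const_mul] at hparts
  linarith

end SchwartzMap

open SchwartzMap

lemma integral_mul_deriv_AGL_sub_nonpos {u₁ u₂ : ℝ → ℝ} (hu₁ : Differentiable ℝ u₁)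
    (hu₂ : Differentiable ℝ u₂) (hr₁ : ∀ ξ, u₁ ξ ∈ Icc (-(1 / √3)) (1 / √3))
    (hr₂ : ∀ ξ, u₂ ξ ∈ Icc (-(1 / √3)) (1 / √3)) {φ : 𝓢(ℝ, ℝ)}
    (hφ : ∀ ξ, deriv φ ξ = u₁ ξ - u₂ ξ)
    (hint : Integrable fun ξ =>
      φ ξ * (deriv (fun x => AGL (u₁ x)) ξ - deriv (fun x => AGL (u₂ x)) ξ)) :
    ∫ ξ, φ ξ * (deriv (fun x => AGL (u₁ x)) ξ - deriv (fun x => AGL (u₂ x)) ξ) ≤ 0 := by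
  have hA : ∀ {u : ℝ → ℝ}, Differentiable ℝ u → (∀ ξ, u ξ ∈ Icc (-(1 / √3)) (1 / √3)) →
      Differentiable ℝ (fun x => AGL (u x)) := fun hu hr ξ =>
    ((hasDerivAt_AGL_s8 (Icc_one_div_sqrt_three_subset (hr ξ))).comp ξ
      (hu ξ).hasDerivAt).differentiableAt
  have hflux : Continuous fun x => AGL (u₁ x) - AGL (u₂ x) :=
    (hA hu₁ hr₁).continuous.sub (hA hu₂ hr₂).continuous
  have hbound : ∀ ξ, ‖AGL (u₁ ξ) - AGL (u₂ ξ)‖ ≤ ‖derivCLM ℝ ℝ φ ξ‖ := fun ξ => by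
    simpa only [derivCLM_apply, hφ, Real.norm_eq_abs] using abs_AGL_sub_le (hr₁ ξ) (hr₂ ξ)
  rw [integral_mul_deriv_eq_deriv_mul_of_integrable (u' := deriv φ)
    (v := fun x => AGL (u₁ x) - AGL (u₂ x))
    (fun x _ => φ.differentiableAt.hasDerivAt)
    (fun x _ => ((hA hu₁ hr₁ x).hasDerivAt.sub (hA hu₂ hr₂ x).hasDerivAt)) hint
    (by simpa only [derivCLM_apply, Pi.mul_def] using
      integrable_mul_of_norm_le (derivCLM ℝ ℝ φ) (derivCLM ℝ ℝ φ) hflux hbound)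
    (integrable_mul_of_norm_le φ (derivCLM ℝ ℝ φ) hflux hbound), neg_nonpos]
  exact integral_nonneg fun ξ => by
    simpa only [Pi.mul_apply, Pi.zero_apply, hφ] using sub_mul_AGL_sub_nonneg (hr₁ ξ) (hr₂ ξ)

lemma integral_two_mul_mul_le_neg_mul_integral_sq {u₁ u₂ : ℝ → ℝ} (hu₁ : Differentiable ℝ u₁)
    (hu₂ : Differentiable ℝ u₂) (hr₁ : ∀ ξ, u₁ ξ ∈ Icc (-(1 / √3)) (1 / √3))
    (hr₂ : ∀ ξ, u₂ ξ ∈ Icc (-(1 / √3)) (1 / √3)) {φ ψ : 𝓢(ℝ, ℝ)}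
    (hφ : ∀ ξ, deriv φ ξ = u₁ ξ - u₂ ξ)
    (hψ : ∀ ξ, ψ ξ = (deriv (fun x => AGL (u₁ x)) ξ - deriv (fun x => AGL (u₂ x)) ξ)
      + ξ / 2 * deriv φ ξ - 1 / 2 * φ ξ) :
    ∫ ξ, 2 * (φ ξ * ψ ξ) ≤ -(3 / 2) * ∫ ξ, φ ξ ^ 2 := by
  set g := fun ξ => deriv (fun x => AGL (u₁ x)) ξ - deriv (fun x => AGL (u₂ x)) ξ
  have hsq : Integrable (fun x => φ x ^ 2) := by simpa only [sq] using integrable_mul φ φ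
  have hx := integrable_id_mul_mul_deriv φ
  have hg : Integrable fun ξ => φ ξ * g ξ :=
    (((integrable_mul φ ψ).sub (hx.const_mul (1 / 2))).add (hsq.const_mul (1 / 2))).congr
      (ae_of_all _ fun ξ => by simp only [Pi.add_apply, Pi.sub_apply, hψ, g]; ring)
  have hsplit : ∫ ξ, 2 * (φ ξ * ψ ξ)
      = 2 * (∫ ξ, φ ξ * g ξ) + (∫ ξ, ξ * (φ ξ * deriv φ ξ)) - ∫ ξ, φ ξ ^ 2 := by
    have hsum : Integrable fun ξ => 2 * (φ ξ * g ξ) + ξ * (φ ξ * deriv φ ξ) :=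
      (hg.const_mul 2).add hx
    rw [← integral_const_mul, ← integral_add (hg.const_mul 2) hx, ← integral_sub hsum hsq]
    exact integral_congr_ae (ae_of_all _ fun ξ => by simp only [hψ, g]; ring)
  rw [hsplit]
  linarith [integral_id_mul_mul_deriv φ, integral_mul_deriv_AGL_sub_nonpos hu₁ hu₂ hr₁ hr₂ hφ hg]

lemma le_exp_mul_mul_of_hasDerivAt_le {G G' : ℝ → ℝ} {K : ℝ} (hG : ContinuousOn G (Ici 0))
    (hG' : ∀ t ∈ Ioi 0, HasDerivAt G (G' t) t) (hle : ∀ t ∈ Ioi 0, G' t ≤ K * G t) {t : ℝ}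
    (ht : 0 ≤ t) : G t ≤ exp (K * t) * G 0 := by
  have hanti : AntitoneOn (fun t => exp (-K * t) * G t) (Ici 0) := by
    refine antitoneOn_of_hasDerivWithinAt_nonpos (convex_Ici 0) (by fun_prop)
      (f' := fun t => exp (-K * t) * (-K * 1) * G t + exp (-K * t) * G' t) (fun t ht => ?_)
      (fun t ht => ?_)
    · rw [interior_Ici] at ht
      exact ((((hasDerivAt_id t).const_mul (-K)).exp).mul (hG' t ht)).hasDerivWithinAt
    · rw [interior_Ici] at ht
      have := mul_le_mul_of_nonneg_left (hle t ht) (exp_pos (-K * t)).le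
      linarith
  have h0 := hanti self_mem_Ici ht ht
  simp only [mul_zero, exp_zero, one_mul] at h0
  calc G t = exp (K * t) * (exp (-K * t) * G t) := by
        rw [← mul_assoc, ← exp_add, neg_mul, add_neg_cancel, exp_zero, one_mul]
    _ ≤ exp (K * t) * G 0 := by gcongr

theorem phase_diffusion_contraction_general
    (ηp ηm : ℝ)
    (e : ℝ → ℝ) (he : IsMixingProfile ηp ηm e)
    (Ψ₁ Ψ₂ dΨ₁ dΨ₂ : ℝ → SchwartzMap ℝ ℝ)
    (hcont₁ : ContinuousOn Ψ₁ (Set.Ici 0)) (hcont₂ : ContinuousOn Ψ₂ (Set.Ici 0))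
    (hdcont₁ : ContinuousOn dΨ₁ (Set.Ici 0)) (hdcont₂ : ContinuousOn dΨ₂ (Set.Ici 0))
    (hderiv₁ : ∀ τ ∈ Set.Ici (0:ℝ), ∀ ξ : ℝ,
      HasDerivWithinAt (fun t => Ψ₁ t ξ) (dΨ₁ τ ξ) (Set.Ici 0) τ)
    (hderiv₂ : ∀ τ ∈ Set.Ici (0:ℝ), ∀ ξ : ℝ,
      HasDerivWithinAt (fun t => Ψ₂ t ξ) (dΨ₂ τ ξ) (Set.Ici 0) τ)
    (heq₁ : ∀ τ ∈ Set.Ici (0:ℝ), ∀ ξ : ℝ,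
      dΨ₁ τ ξ = deriv (fun x => AGL (e x + deriv (Ψ₁ τ) x)) ξ
        + ξ / 2 * (e ξ + deriv (Ψ₁ τ) ξ) - (1/2) * (NGL e ηm ξ + Ψ₁ τ ξ))
    (heq₂ : ∀ τ ∈ Set.Ici (0:ℝ), ∀ ξ : ℝ,
      dΨ₂ τ ξ = deriv (fun x => AGL (e x + deriv (Ψ₂ τ) x)) ξ
        + ξ / 2 * (e ξ + deriv (Ψ₂ τ) ξ) - (1/2) * (NGL e ηm ξ + Ψ₂ τ ξ))
    (hrange₁ : ∀ τ ∈ Set.Ici (0:ℝ), ∀ ξ : ℝ,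
      e ξ + deriv (Ψ₁ τ) ξ ∈ Set.Ioo (-(1 / Real.sqrt 3)) (1 / Real.sqrt 3))
    (hrange₂ : ∀ τ ∈ Set.Ici (0:ℝ), ∀ ξ : ℝ,
      e ξ + deriv (Ψ₂ τ) ξ ∈ Set.Ioo (-(1 / Real.sqrt 3)) (1 / Real.sqrt 3)) :
    ∀ τ ∈ Set.Ici (0:ℝ),
      Real.sqrt (∫ ξ : ℝ, (Ψ₁ τ ξ - Ψ₂ τ ξ) ^ 2)
        ≤ Real.exp (-(3 * τ) / 4) * Real.sqrt (∫ ξ : ℝ, (Ψ₁ 0 ξ - Ψ₂ 0 ξ) ^ 2) := by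
  intro τ hτ
  set Φ : ℝ → 𝓢(ℝ, ℝ) := fun t => Ψ₁ t - Ψ₂ t
  have hΦ : ContinuousOn Φ (Ici 0) := hcont₁.sub hcont₂
  have hdΦ : ContinuousOn (fun t => dΨ₁ t - dΨ₂ t) (Ici 0) := hdcont₁.sub hdcont₂
  have hdissip : ∀ t ∈ Ioi (0 : ℝ),
      ∫ ξ, 2 * (Φ t ξ * (dΨ₁ t - dΨ₂ t) ξ) ≤ -(3 / 2) * ∫ ξ, Φ t ξ ^ 2 := fun t ht =>
    integral_two_mul_mul_le_neg_mul_integral_sq (u₁ := fun x => e x + deriv (Ψ₁ t) x)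
      (u₂ := fun x => e x + deriv (Ψ₂ t) x)
      ((he.1.differentiable two_ne_zero).add (differentiable_deriv (Ψ₁ t)))
      ((he.1.differentiable two_ne_zero).add (differentiable_deriv (Ψ₂ t)))
      (fun ξ => Ioo_subset_Icc_self (hrange₁ t (Ioi_subset_Ici_self ht) ξ))
      (fun ξ => Ioo_subset_Icc_self (hrange₂ t (Ioi_subset_Ici_self ht) ξ))
      (fun ξ => by rw [deriv_coe_sub]; ring)
      (fun ξ => by
        simp only [Φ, sub_apply, heq₁ t (Ioi_subset_Ici_self ht) ξ,
          heq₂ t (Ioi_subset_Ici_self ht) ξ, deriv_coe_sub]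
        ring)
  have hG := le_exp_mul_mul_of_hasDerivAt_le (continuousOn_integral_sq hΦ)
    (fun t ht => hasDerivAt_integral_sq (Ioi_mem_nhds ht) (hΦ.mono Ioi_subset_Ici_self)
      (hdΦ.mono Ioi_subset_Ici_self) fun s hs ξ =>
        ((hderiv₁ s (Ioi_subset_Ici_self hs) ξ).sub
          (hderiv₂ s (Ioi_subset_Ici_self hs) ξ)).hasDerivAt (Ici_mem_nhds hs))
    hdissip hτ
  calc √(∫ ξ, (Ψ₁ τ ξ - Ψ₂ τ ξ) ^ 2) ≤ √(exp (-(3 / 2) * τ) * ∫ ξ, Φ 0 ξ ^ 2) := sqrt_le_sqrt hG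
    _ = exp (-(3 * τ) / 4) * √(∫ ξ, (Ψ₁ 0 ξ - Ψ₂ 0 ξ) ^ 2) := by
      rw [sqrt_mul (exp_pos _).le, ← exp_half]
      congr 2
      ring

/-- Contraction for the rescaled phase diffusion equation: any two Schwartz-class
solutions of `∂τψ = ∂ξ[A(η̃+∂ξψ)] + (ξ/2)(η̃+∂ξψ) - (1/2)(Ñ+ψ)` whose local
wave-vector stays in `(-1/√3, 1/√3)` approach each other in `L²` at rate
`e^{-3τ/4}`. -/
theorem phase_diffusion_contraction
    (ηp ηm : ℝ)
    (hp : ηp ∈ Set.Ioo (-(1 / Real.sqrt 3)) (1 / Real.sqrt 3))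
    (hm : ηm ∈ Set.Ioo (-(1 / Real.sqrt 3)) (1 / Real.sqrt 3))
    (e : ℝ → ℝ) (he : IsMixingProfile ηp ηm e)
    (Ψ₁ Ψ₂ dΨ₁ dΨ₂ : ℝ → SchwartzMap ℝ ℝ)
    (hcont₁ : ContinuousOn Ψ₁ (Set.Ici 0)) (hcont₂ : ContinuousOn Ψ₂ (Set.Ici 0))
    (hdcont₁ : ContinuousOn dΨ₁ (Set.Ici 0)) (hdcont₂ : ContinuousOn dΨ₂ (Set.Ici 0))
    (hderiv₁ : ∀ τ ∈ Set.Ici (0:ℝ), ∀ ξ : ℝ,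
      HasDerivWithinAt (fun t => Ψ₁ t ξ) (dΨ₁ τ ξ) (Set.Ici 0) τ)
    (hderiv₂ : ∀ τ ∈ Set.Ici (0:ℝ), ∀ ξ : ℝ,
      HasDerivWithinAt (fun t => Ψ₂ t ξ) (dΨ₂ τ ξ) (Set.Ici 0) τ)
    (heq₁ : ∀ τ ∈ Set.Ici (0:ℝ), ∀ ξ : ℝ,
      dΨ₁ τ ξ = deriv (fun x => AGL (e x + deriv (Ψ₁ τ) x)) ξ
        + ξ / 2 * (e ξ + deriv (Ψ₁ τ) ξ) - (1/2) * (NGL e ηm ξ + Ψ₁ τ ξ))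
    (heq₂ : ∀ τ ∈ Set.Ici (0:ℝ), ∀ ξ : ℝ,
      dΨ₂ τ ξ = deriv (fun x => AGL (e x + deriv (Ψ₂ τ) x)) ξ
        + ξ / 2 * (e ξ + deriv (Ψ₂ τ) ξ) - (1/2) * (NGL e ηm ξ + Ψ₂ τ ξ))
    (hrange₁ : ∀ τ ∈ Set.Ici (0:ℝ), ∀ ξ : ℝ,
      e ξ + deriv (Ψ₁ τ) ξ ∈ Set.Ioo (-(1 / Real.sqrt 3)) (1 / Real.sqrt 3))
    (hrange₂ : ∀ τ ∈ Set.Ici (0:ℝ), ∀ ξ : ℝ,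
      e ξ + deriv (Ψ₂ τ) ξ ∈ Set.Ioo (-(1 / Real.sqrt 3)) (1 / Real.sqrt 3)) :
    ∀ τ ∈ Set.Ici (0:ℝ),
      Real.sqrt (∫ ξ : ℝ, (Ψ₁ τ ξ - Ψ₂ τ ξ) ^ 2)
        ≤ Real.exp (-(3 * τ) / 4) * Real.sqrt (∫ ξ : ℝ, (Ψ₁ 0 ξ - Ψ₂ 0 ξ) ^ 2) :=
  phase_diffusion_contraction_general ηp ηm e he Ψ₁ Ψ₂ dΨ₁ dΨ₂ hcont₁ hcont₂ hdcont₁ hdcont₂ hderiv₁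
    hderiv₂ heq₁ heq₂ hrange₁ hrange₂
end
end
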